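/- arXiv:2108.03590 — 6 statements merged into one kernel-verified Lean document; each statement's English description precedes it below -/
import Mathlib

section
/- For any integers m ≥ 0 and n ≥ m+2, the generalized Narayana polynomial N_{n,m}(x) has exactly one positive zero; that is, there exists a unique real number r > 0 with N_{n,m}(r) = 0. -/
/-!
Write `N_{n,m}(x) = ∑ c_k x^k`. Since `C(n,k+1)/C(n,k) = (n-k)/(k+1)` and
`C(m,k-1)/C(m,k) = k/(m-k+1)`, the sign of `c_k` for `k ≤ m` is that of `m + 1 - k(n-m)`, and
`c_k ≤ 0` for `k > m`. So the coefficients change sign exactly once, at `K = ⌊(m+1)/(n-m)⌋`,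
with `c_0 = 1` and `c_{m+1} = -C(n,m+2) < 0` when `n ≥ m + 2`. Then `x^{-K} N_{n,m}(x)` is a sum
of non-increasing functions on `(0, ∞)`, one of them strictly decreasing, so it has at most one
zero there; a zero exists because `N_{n,m}(0) = 1` while `N_{n,m}(x) → -∞`.
-/

/-- The generalized Narayana polynomial `N_{n,m}(x)`, with the convention
`C(m, k-1) = 0` when `k = 0`. -/
noncomputable def genNarayana (n m : ℕ) (x : ℝ) : ℝ :=
  ∑ k ∈ Finset.range (n + 1),
    (((n.choose k : ℝ) * (m.choose k : ℝ)) -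
      (if k = 0 then 0 else (n.choose (k + 1) : ℝ) * (m.choose (k - 1) : ℝ))) * x ^ k

open Polynomial Filter Set

theorem Nat.cast_choose_succ_right_mul {R : Type*} [Ring R] (n k : ℕ) :
    (n.choose (k + 1) : R) * (k + 1) = n.choose k * (n - k) := by
  rcases le_or_gt k n with hk | hk
  · have h := congr_arg (Nat.cast : ℕ → R) (n.choose_succ_right_eq k)
    push_cast [hk] at h
    exact h
  · simp [Nat.choose_eq_zero_of_lt hk, Nat.choose_eq_zero_of_lt (hk.trans k.lt_succ_self)]

namespace Polynomial

theorem strictAntiOn_zpow_neg_mul_eval {p : ℝ[X]} {K j : ℕ}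
    (hle : ∀ k ≤ K, 0 ≤ p.coeff k) (hgt : ∀ k, K < k → p.coeff k ≤ 0)
    (hj : p.coeff j < 0) :
    StrictAntiOn (fun x : ℝ ↦ x ^ (-(K : ℤ)) * p.eval x) (Ioi 0) := by
  intro x (hx : 0 < x) y (hy : 0 < y) hxy
  have hjK : K < j := lt_of_not_ge fun h ↦ (hle j h).not_gt hj
  have hj_mem : j ∈ Finset.range (p.natDegree + 1) :=
    Finset.mem_range_succ_iff.mpr (le_natDegree_of_ne_zero hj.ne)
  have hterm (z : ℝ) (hz : 0 < z) : z ^ (-(K : ℤ)) * p.eval z =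
      ∑ i ∈ Finset.range (p.natDegree + 1), p.coeff i * z ^ ((i : ℤ) - K) := by
    rw [eval_eq_sum_range, Finset.mul_sum]
    refine Finset.sum_congr rfl fun i _ ↦ ?_
    rw [sub_eq_add_neg, zpow_add₀ hz.ne', zpow_natCast]
    ring
  simp only [hterm x hx, hterm y hy]
  refine Finset.sum_lt_sum (fun i _ ↦ ?_) ⟨j, hj_mem, ?_⟩
  · rcases le_or_gt i K with hi | hi
    · refine mul_le_mul_of_nonneg_left ?_ (hle i hi)
      rw [show (i : ℤ) - K = -((K - i : ℕ) : ℤ) by omega, zpow_neg, zpow_neg, zpow_natCast,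
        zpow_natCast]
      exact inv_anti₀ (by positivity) (pow_le_pow_left₀ hx.le hxy.le _)
    · exact mul_le_mul_of_nonpos_left (zpow_le_zpow_left₀ (by omega) hx.le hxy.le)
        (hgt i hi)
  · exact mul_lt_mul_of_neg_left (zpow_lt_zpow_left₀ (by omega) hx.le hxy) hj

theorem existsUnique_pos_eval_eq_zero_of_coeff_sign_change {p : ℝ[X]} {K j : ℕ}
    (hle : ∀ k ≤ K, 0 ≤ p.coeff k) (hgt : ∀ k, K < k → p.coeff k ≤ 0)
    (h0 : 0 < p.coeff 0) (hj : p.coeff j < 0) :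
    ∃! r : ℝ, 0 < r ∧ p.eval r = 0 := by
  have hjK : K < j := lt_of_not_ge fun h ↦ (hle j h).not_gt hj
  have hjdeg : j ≤ p.natDegree := le_natDegree_of_ne_zero hj.ne
  have hlead : p.leadingCoeff < 0 :=
    (hgt _ (hjK.trans_le hjdeg)).lt_of_ne <|
      leadingCoeff_ne_zero.mpr fun hp ↦ by simp [hp] at hj
  have hdeg : 0 < p.degree := natDegree_pos_iff_degree_pos.mp (by omega)
  obtain ⟨t, ht_neg, ht_pos⟩ :=
    ((tendsto_atBot_of_leadingCoeff_nonpos p hdeg hlead.le).eventually_lt_atBot 0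
      |>.and (eventually_gt_atTop 0)).exists
  obtain ⟨r, hr, hr_root⟩ := intermediate_value_Ioo' ht_pos.le p.continuous.continuousOn
    ⟨ht_neg, by rwa [← coeff_zero_eq_eval_zero]⟩
  refine ⟨r, ⟨hr.1, hr_root⟩, fun s ⟨hs, hs_root⟩ ↦ ?_⟩
  refine (strictAntiOn_zpow_neg_mul_eval hle hgt hj).injOn hs hr.1 ?_
  simp [hs_root, hr_root]

end Polynomial

noncomputable def genNarayanaCoeff (n m k : ℕ) : ℝ :=
  ((n.choose k : ℝ) * (m.choose k : ℝ)) -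
    (if k = 0 then 0 else (n.choose (k + 1) : ℝ) * (m.choose (k - 1) : ℝ))

noncomputable def genNarayanaPoly (n m : ℕ) : ℝ[X] :=
  ∑ k ∈ Finset.range (n + 1), monomial k (genNarayanaCoeff n m k)

theorem eval_genNarayanaPoly (n m : ℕ) (x : ℝ) :
    (genNarayanaPoly n m).eval x = genNarayana n m x := by
  simp only [genNarayanaPoly, eval_finsetSum, eval_monomial]
  rfl

theorem genNarayanaCoeff_eq_zero_of_lt {n m k : ℕ} (h : n < k) : genNarayanaCoeff n m k = 0 := by
  simp [genNarayanaCoeff, Nat.choose_eq_zero_of_lt h,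
    Nat.choose_eq_zero_of_lt (h.trans k.lt_succ_self)]

theorem coeff_genNarayanaPoly (n m k : ℕ) :
    (genNarayanaPoly n m).coeff k = genNarayanaCoeff n m k := by
  simp only [genNarayanaPoly, finsetSum_coeff, coeff_monomial, Finset.sum_ite_eq',
    Finset.mem_range]
  split_ifs with hk
  · rfl
  · exact (genNarayanaCoeff_eq_zero_of_lt (by omega)).symm

theorem genNarayanaCoeff_zero (n m : ℕ) : genNarayanaCoeff n m 0 = 1 := by
  simp [genNarayanaCoeff]

theorem genNarayanaCoeff_succ_self (n m : ℕ) :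
    genNarayanaCoeff n m (m + 1) = -n.choose (m + 2) := by
  simp [genNarayanaCoeff]

theorem genNarayanaCoeff_mul (n m k : ℕ) :
    genNarayanaCoeff n m k * ((k + 1) * (m + 1 - k)) =
      n.choose k * m.choose k * (m + 1 - k * ((n : ℝ) - m)) := by
  rcases k with _ | k
  · simp [genNarayanaCoeff]
  · have hn := Nat.cast_choose_succ_right_mul (R := ℝ) n (k + 1)
    have hm := Nat.cast_choose_succ_right_mul (R := ℝ) m k
    simp only [genNarayanaCoeff, if_neg k.succ_ne_zero, Nat.add_sub_cancel]
    push_cast at hn hm ⊢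
    linear_combination
      -(m.choose k * ((m : ℝ) - k)) * hn + n.choose (k + 1) * ((n : ℝ) - (k + 1)) * hm

theorem genNarayanaCoeff_nonneg_of_le_div {n m k : ℕ} (h : m + 2 ≤ n)
    (hk : k ≤ (m + 1) / (n - m)) :
    0 ≤ genNarayanaCoeff n m k := by
  have hkn : k * (n - m) ≤ m + 1 := (Nat.le_div_iff_mul_le (by omega)).mp hk
  have hkm : k ≤ m := by nlinarith [Nat.mul_le_mul_left k (show 2 ≤ n - m by omega)]
  have hkn' := (Nat.cast_le (α := ℝ)).mpr hkn
  push_cast [Nat.cast_sub (by omega : m ≤ n)] at hkn'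
  have hkm' : (k : ℝ) ≤ m := by exact_mod_cast hkm
  have hpos : (0 : ℝ) < (k + 1) * (m + 1 - k) := mul_pos (by positivity) (by linarith)
  refine le_of_mul_le_mul_right ?_ hpos
  rw [zero_mul, genNarayanaCoeff_mul]
  exact mul_nonneg (by positivity) (by linarith)

theorem genNarayanaCoeff_nonpos_of_div_lt {n m k : ℕ} (h : m < n) (hk : (m + 1) / (n - m) < k) :
    genNarayanaCoeff n m k ≤ 0 := by
  rcases le_or_gt k m with hkm | hmk
  · have hkn := (Nat.cast_lt (α := ℝ)).mpr ((Nat.div_lt_iff_lt_mul (by omega)).mp hk)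
    push_cast [Nat.cast_sub h.le] at hkn
    have hkm' : (k : ℝ) ≤ m := by exact_mod_cast hkm
    have hpos : (0 : ℝ) < (k + 1) * (m + 1 - k) := mul_pos (by positivity) (by linarith)
    refine le_of_mul_le_mul_right ?_ hpos
    rw [zero_mul, genNarayanaCoeff_mul]
    exact mul_nonpos_of_nonneg_of_nonpos (by positivity) (by linarith)
  · simp only [genNarayanaCoeff, Nat.choose_eq_zero_of_lt hmk, if_neg (by omega : k ≠ 0),
      Nat.cast_zero, mul_zero, zero_sub, neg_nonpos]
    positivity

theorem genNarayana_unique_positive_zero (m n : ℕ) (h : m + 2 ≤ n) :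
    ∃! r : ℝ, 0 < r ∧ genNarayana n m r = 0 := by
  simp only [← eval_genNarayanaPoly]
  refine existsUnique_pos_eval_eq_zero_of_coeff_sign_change
    (K := (m + 1) / (n - m)) (j := m + 1) (fun k hk ↦ ?_) (fun k hk ↦ ?_) ?_ ?_ <;>
    rw [coeff_genNarayanaPoly]
  · exact genNarayanaCoeff_nonneg_of_le_div h hk
  · exact genNarayanaCoeff_nonpos_of_div_lt (by omega) hk
  · exact genNarayanaCoeff_zero n m ▸ one_pos
  · simpa [genNarayanaCoeff_succ_self] using Nat.choose_pos h
end

section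
/- Fix integers m ≥ 0 and n ≥ m+4. Then for every real x > 0 one has N_{n-1,m}(x) > N_{n,m}(x). -/
/-!
Write `N_{n,m}(x) = ∑ₖ a(n,m,k) xᵏ`. By Pascal's rule, for `k = j + 1`,
`a(p,m,k) - a(p+1,m,k) = C(p,j+1) C(m,j) - C(p,j) C(m,j+1)`,
which is nonnegative for `m ≤ p` because `C(m,j+1)/C(m,j) = (m-j)/(j+1)` is increasing in `m`,
and equals `p - m > 0` at `k = 1`. The top coefficient `a(p+1,m,p+1)` vanishes, so
`N_{p,m}(x) - N_{p+1,m}(x)` is a polynomial with nonnegative coefficients and a positive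
linear coefficient.
-/

noncomputable def narayanaCoeff (n m k : ℕ) : ℝ :=
  (n.choose k : ℝ) * (m.choose k : ℝ) -
    (if k = 0 then 0 else (n.choose (k + 1) : ℝ) * (m.choose (k - 1) : ℝ))

lemma genNarayana_eq_sum_narayanaCoeff (n m : ℕ) (x : ℝ) :
    genNarayana n m x = ∑ k ∈ Finset.range (n + 1), narayanaCoeff n m k * x ^ k :=
  rfl

lemma narayanaCoeff_self {n m : ℕ} (hm : m < n) : narayanaCoeff n m n = 0 := by
  simp [narayanaCoeff, Nat.choose_eq_zero_of_lt hm]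

lemma Nat.choose_mul_choose_succ_le {p m : ℕ} (hm : m ≤ p) (j : ℕ) :
    p.choose j * m.choose (j + 1) ≤ p.choose (j + 1) * m.choose j := by
  refine Nat.le_of_mul_le_mul_right ?_ j.succ_pos
  calc p.choose j * m.choose (j + 1) * (j + 1)
      = p.choose j * m.choose j * (m - j) := by rw [mul_assoc, Nat.choose_succ_right_eq]; ring
    _ ≤ p.choose j * m.choose j * (p - j) := by gcongr
    _ = p.choose (j + 1) * m.choose j * (j + 1) := by
        rw [mul_right_comm (p.choose (j + 1)), Nat.choose_succ_right_eq]; ring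

lemma narayanaCoeff_sub_narayanaCoeff_succ (p m j : ℕ) :
    narayanaCoeff p m (j + 1) - narayanaCoeff (p + 1) m (j + 1) =
      (p.choose (j + 1) * m.choose j : ℕ) - (p.choose j * m.choose (j + 1) : ℕ) := by
  simp only [narayanaCoeff, Nat.choose_succ_succ p, Nat.add_sub_cancel, Nat.succ_ne_zero,
    if_false]
  push_cast
  ring

lemma narayanaCoeff_succ_le {p m : ℕ} (hm : m ≤ p) (k : ℕ) :
    narayanaCoeff (p + 1) m k ≤ narayanaCoeff p m k := by
  rcases k with _ | j
  · simp [narayanaCoeff]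
  · rw [← sub_nonneg, narayanaCoeff_sub_narayanaCoeff_succ, sub_nonneg]
    exact_mod_cast Nat.choose_mul_choose_succ_le hm j

lemma narayanaCoeff_succ_one_lt {p m : ℕ} (hm : m < p) :
    narayanaCoeff (p + 1) m 1 < narayanaCoeff p m 1 := by
  rw [← sub_pos, narayanaCoeff_sub_narayanaCoeff_succ, sub_pos]
  simpa using hm

theorem genNarayana_strict_anti_in_n (m n : ℕ) (h : m + 4 ≤ n) (x : ℝ) (hx : 0 < x) :
    genNarayana n m x < genNarayana (n - 1) m x := by
  obtain ⟨p, rfl⟩ : ∃ p, n = p + 1 := ⟨n - 1, by omega⟩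
  have hm : m < p := by omega
  rw [Nat.add_sub_cancel, genNarayana_eq_sum_narayanaCoeff, genNarayana_eq_sum_narayanaCoeff,
    Finset.sum_range_succ, narayanaCoeff_self (by omega), zero_mul, add_zero]
  refine Finset.sum_lt_sum (fun k _ ↦ ?_) ⟨1, Finset.mem_range.mpr (by omega), ?_⟩
  · exact mul_le_mul_of_nonneg_right (narayanaCoeff_succ_le hm.le k) (pow_pos hx k).le
  · exact mul_lt_mul_of_pos_right (narayanaCoeff_succ_one_lt hm) (pow_pos hx 1)
end

section
/- Fix an integer m ≥ 0, and for each integer n ≥ m+3 let r_{n,m}^+ > 0 be the unique positive zero of N_{n,m}(x). Then the sequence (r_{n,m}^+) tends to 0 as n → ∞. -/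
/-!
The positive coefficients of `N_{n,m}` live in degrees `k ≤ m` and are `O(n^m)`, while the
coefficient of `x^(m+1)` is `-C(n, m+2)`, of order `n^(m+2)`. Hence for fixed `ε > 0` and all
large `n`, `N_{n,m}(x) ≤ x^(m+1) (O(n^m) - C(n, m+2)) < 0` on `[ε, ∞)`, so every positive zero
eventually lies below `ε`.
-/

open Filter Asymptotics Finset

lemma isLittleO_choose_of_lt {k l : ℕ} (h : k < l) :
    (fun n : ℕ ↦ (n.choose k : ℝ)) =o[atTop] (fun n : ℕ ↦ (n.choose l : ℝ)) :=
  (isTheta_choose k).trans_isLittleO <|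
    ((isLittleO_pow_pow_atTop_of_lt h).comp_tendsto tendsto_natCast_atTop_atTop).trans_isTheta
      (isTheta_choose l).symm

lemma eventually_sum_mul_choose_lt_choose (a : ℕ → ℝ) {m l : ℕ} (h : m < l) :
    ∀ᶠ n : ℕ in atTop, ∑ k ∈ range (m + 1), a k * n.choose k < (n.choose l : ℝ) := by
  have hsum : (fun n : ℕ ↦ ∑ k ∈ range (m + 1), a k * n.choose k) =o[atTop]
      (fun n : ℕ ↦ (n.choose l : ℝ)) :=
    IsLittleO.fun_sum fun k hk ↦
      (isLittleO_choose_of_lt (by simp at hk; omega)).const_mul_left (a k)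
  filter_upwards [hsum.bound one_half_pos, eventually_ge_atTop l] with n hbound hn
  have hpos : (0 : ℝ) < n.choose l := mod_cast Nat.choose_pos hn
  rw [Real.norm_of_nonneg hpos.le] at hbound
  calc _ ≤ ‖∑ k ∈ range (m + 1), a k * n.choose k‖ := Real.le_norm_self _
    _ ≤ 1 / 2 * n.choose l := hbound
    _ < n.choose l := by linarith

lemma pow_le_pow_div_pow {ε x : ℝ} (hε : 0 < ε) (hx : ε ≤ x) {k l : ℕ} (hkl : k ≤ l) :
    x ^ k ≤ x ^ l / ε ^ (l - k) := by
  have hx0 : 0 ≤ x := (hε.trans_le hx).le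
  rw [le_div_iff₀ (pow_pos hε _)]
  calc x ^ k * ε ^ (l - k) ≤ x ^ k * x ^ (l - k) := by gcongr
    _ = x ^ l := by rw [← pow_add, Nat.add_sub_cancel' hkl]

lemma genNarayana_le {n m : ℕ} {x : ℝ} (hx : 0 ≤ x) (hmn : m + 1 ≤ n) :
    genNarayana n m x ≤ ∑ k ∈ range (m + 1), (n.choose k * m.choose k : ℝ) * x ^ k
      - n.choose (m + 2) * x ^ (m + 1) := by
  simp only [genNarayana, sub_mul, sum_sub_distrib]
  have hpos : ∑ k ∈ range (n + 1), (n.choose k * m.choose k : ℝ) * x ^ k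
      = ∑ k ∈ range (m + 1), (n.choose k * m.choose k : ℝ) * x ^ k := by
    refine (sum_subset (range_subset_range.2 (by omega)) fun k _ hk ↦ ?_).symm
    simp [Nat.choose_eq_zero_of_lt (not_lt.1 (mt mem_range.2 hk))]
  have hneg : (n.choose (m + 2) : ℝ) * x ^ (m + 1) ≤ ∑ k ∈ range (n + 1),
      (if k = 0 then 0 else (n.choose (k + 1) * m.choose (k - 1) : ℝ)) * x ^ k := by
    simpa using single_le_sum (f := fun k ↦
      (if k = 0 then 0 else (n.choose (k + 1) * m.choose (k - 1) : ℝ)) * x ^ k)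
      (fun k _ ↦ by positivity) (mem_range.2 (by omega : m + 1 < n + 1))
  linarith

lemma genNarayana_le_pow_mul {n m : ℕ} {ε x : ℝ} (hε : 0 < ε) (hx : ε ≤ x) (hmn : m + 1 ≤ n) :
    genNarayana n m x ≤ x ^ (m + 1) *
      (∑ k ∈ range (m + 1), m.choose k / ε ^ (m + 1 - k) * n.choose k - n.choose (m + 2)) := by
  have hsum : ∑ k ∈ range (m + 1), (n.choose k * m.choose k : ℝ) * x ^ k ≤
      x ^ (m + 1) * ∑ k ∈ range (m + 1), m.choose k / ε ^ (m + 1 - k) * n.choose k := by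
    rw [mul_sum]
    refine sum_le_sum fun k hk ↦ ?_
    have hxk := pow_le_pow_div_pow hε hx (by simp at hk; omega : k ≤ m + 1)
    calc (n.choose k * m.choose k : ℝ) * x ^ k
        ≤ (n.choose k * m.choose k : ℝ) * (x ^ (m + 1) / ε ^ (m + 1 - k)) := by gcongr
      _ = _ := by ring
  linarith [genNarayana_le (hε.trans_le hx).le hmn]

lemma eventually_genNarayana_neg (m : ℕ) {ε : ℝ} (hε : 0 < ε) :
    ∀ᶠ n in atTop, ∀ x, ε ≤ x → genNarayana n m x < 0 := by
  filter_upwards [eventually_ge_atTop (m + 1),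
    eventually_sum_mul_choose_lt_choose (fun k ↦ m.choose k / ε ^ (m + 1 - k))
      (by omega : m < m + 2)] with n hn hlt x hx
  exact (genNarayana_le_pow_mul hε hx hn).trans_lt
    (mul_neg_of_pos_of_neg (pow_pos (hε.trans_le hx) _) (sub_neg.2 hlt))

theorem genNarayana_positive_zero_tendsto_zero (m : ℕ) (r : ℕ → ℝ)
    (hr : ∀ n : ℕ, m + 3 ≤ n → 0 < r n ∧ genNarayana n m (r n) = 0) :
    Filter.Tendsto r Filter.atTop (nhds 0) := by
  refine tendsto_order.2 ⟨fun a ha ↦ ?_, fun ε hε ↦ ?_⟩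
  · filter_upwards [eventually_ge_atTop (m + 3)] with n hn using ha.trans (hr n hn).1
  · filter_upwards [eventually_ge_atTop (m + 3), eventually_genNarayana_neg m hε]
      with n hn hneg
    by_contra! h
    exact (hneg _ h).ne (hr n hn).2
end

section
/- For nonnegative integers n, m, k, the coefficient identity C(n,k)·C(m,k) − C(n,k+1)·C(m,k−1) = C(n+1,k+1)·C(m+1,k)·((m−n)k + m + 1) / ((n+1)(m+1)) holds (as an identity of rational numbers, where m−n is computed in the integers). -/
/-!
By the absorption identities, `(n+1)(m+1)` times either side is `C(n+1,k+1) C(m+1,k)` times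
`(k+1)(m+1-k) - (n-k)k = (m-n)k + m + 1`.
-/

namespace Nat

variable {R : Type*} [CommRing R]

theorem cast_add_one_mul_choose (n k : ℕ) :
    ((n : R) + 1) * n.choose k = (n + 1).choose (k + 1) * (k + 1) := by
  exact_mod_cast congrArg (Nat.cast : ℕ → R) (add_one_mul_choose_eq n k)

theorem cast_add_one_mul_choose_succ (n k : ℕ) :
    ((n : R) + 1) * n.choose (k + 1) = (n + 1).choose (k + 1) * (n - k) := by
  have pascal : ((n + 1).choose (k + 1) : R) = n.choose k + n.choose (k + 1) := by
    exact_mod_cast congrArg (Nat.cast : ℕ → R) (choose_succ_succ n k)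
  linear_combination -cast_add_one_mul_choose (R := R) n k - ((n : R) + 1) * pascal

theorem cast_add_one_mul_choose_eq_sub (m k : ℕ) :
    ((m : R) + 1) * m.choose k = (m + 1).choose k * (m + 1 - k) := by
  cases k with
  | zero => simp
  | succ j =>
    rw [cast_add_one_mul_choose_succ]
    push_cast
    ring

/-- The left factor is `C(m, k-1)` with the convention `C(m, -1) = 0`. -/
theorem cast_add_one_mul_choose_pred (m k : ℕ) :
    ((m : R) + 1) * (if k = 0 then 0 else (m.choose (k - 1) : R)) = (m + 1).choose k * k := by
  cases k with
  | zero => simp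
  | succ j =>
    rw [if_neg j.succ_ne_zero, add_tsub_cancel_right, cast_add_one_mul_choose]
    push_cast
    ring

end Nat

theorem narayana_coefficient_identity (n m k : ℕ) :
    ((n.choose k : ℚ) * (m.choose k : ℚ)) -
        (if k = 0 then 0 else (n.choose (k + 1) : ℚ) * (m.choose (k - 1) : ℚ)) =
      ((n + 1).choose (k + 1) : ℚ) * ((m + 1).choose k : ℚ) *
          (((m : ℚ) - n) * k + m + 1) / (((n : ℚ) + 1) * ((m : ℚ) + 1)) := by
  have hn : (n : ℚ) + 1 ≠ 0 := by positivity
  have hm : (m : ℚ) + 1 ≠ 0 := by positivity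
  have h₁ := Nat.cast_add_one_mul_choose (R := ℚ) n k
  have h₂ := Nat.cast_add_one_mul_choose_eq_sub (R := ℚ) m k
  have h₃ := Nat.cast_add_one_mul_choose_succ (R := ℚ) n k
  have h₄ := Nat.cast_add_one_mul_choose_pred (R := ℚ) m k
  have hT : (if k = 0 then 0 else (n.choose (k + 1) : ℚ) * (m.choose (k - 1) : ℚ)) =
      n.choose (k + 1) * (if k = 0 then 0 else (m.choose (k - 1) : ℚ)) := by
    rw [mul_ite, mul_zero]
  rw [hT, eq_div_iff (mul_ne_zero hn hm)]
  linear_combination (m.choose k * ((m : ℚ) + 1)) * h₁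
    + ((n + 1).choose (k + 1) * ((k : ℚ) + 1)) * h₂
    - ((if k = 0 then 0 else (m.choose (k - 1) : ℚ)) * ((m : ℚ) + 1)) * h₃
    - ((n + 1).choose (k + 1) * ((n : ℚ) - k)) * h₄
end

section
/- For every integer m ≥ 0, the generalized Narayana polynomial N_{m+2,m} vanishes at x = 1, i.e., N_{m+2,m}(1) = Σ_{k=0}^{m+2} (C(m+2,k)·C(m,k) − C(m+2,k+1)·C(m,k−1)) = 0. -/
/-! Reindexing both halves of `N_{n,m}(1)` as Vandermonde convolutions gives
`N_{n,m}(1) = C(n+m, m) - C(n+m, m+2)`, and for `n = m + 2` these two binomial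
coefficients agree by symmetry. -/

open Finset

-- The summands vanish for `k > m` and for `k + d > n`, so any range with `n < N + d` is long enough.
theorem Nat.sum_range_choose_add_mul_choose {n m d N : ℕ} (hN : n < N + d) :
    ∑ k ∈ range N, n.choose (k + d) * m.choose k = (n + m).choose (m + d) := by
  rw [add_choose_eq]
  refine sum_bij_ne_zero (fun k _ _ ↦ (k + d, m - k)) ?_ ?_ ?_ ?_
  · intro k _ hk
    simp only [mul_ne_zero_iff, choose_ne_zero_iff] at hk
    rw [HasAntidiagonal.mem_antidiagonal]
    omega
  · intro a _ _ b _ _ hab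
    simp only [Prod.mk.injEq] at hab
    omega
  · rintro ⟨i, j⟩ hij hne
    rw [HasAntidiagonal.mem_antidiagonal] at hij
    simp only [mul_ne_zero_iff, choose_ne_zero_iff] at hne
    exact ⟨m - j, mem_range.2 (by omega), by simp only [ne_eq, mul_eq_zero, choose_eq_zero_iff]; omega,
      Prod.ext (by omega) (by omega)⟩
  · intro k _ hk
    simp only [mul_ne_zero_iff, choose_ne_zero_iff] at hk
    rw [choose_symm hk.2]

theorem genNarayana_one (n m : ℕ) :
    genNarayana n m 1 = (n + m).choose m - (n + m).choose (m + 2) := by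
  have hlow : ∑ k ∈ range (n + 1), n.choose k * m.choose k = (n + m).choose m :=
    Nat.sum_range_choose_add_mul_choose (d := 0) n.lt_succ_self
  have hhigh : ∑ k ∈ range (n + 1),
      (if k = 0 then 0 else n.choose (k + 1) * m.choose (k - 1)) = (n + m).choose (m + 2) := by
    simp only [sum_range_succ', if_pos, Nat.add_one_ne_zero, if_false, Nat.add_sub_cancel, add_zero]
    exact Nat.sum_range_choose_add_mul_choose (d := 2) (by omega)
  rw [← hlow, ← hhigh]
  push_cast
  simp only [genNarayana, one_pow, mul_one, sum_sub_distrib]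

theorem genNarayana_at_one_vanishes (m : ℕ) : genNarayana (m + 2) m 1 = 0 := by
  rw [genNarayana_one, Nat.choose_symm_of_eq_add (by ring : m + 2 + m = m + (m + 2)), sub_self]
end

section
/- Let m ≥ 0 and n ≥ m+4 be integers, and let r_{n,m}^+ > 0 be the unique positive zero of N_{n,m}(x). Then N_{n,m+1}(r_{n,m}^+) > 0. -/
open Finset

structure StrictLogConcaveUpTo (a : ℕ → ℝ) (n : ℕ) : Prop where
  pos : ∀ i ≤ n, 0 < a i
  eq_zero : ∀ i, n < i → a i = 0
  mul_lt_sq : ∀ i, i + 2 ≤ n → a i * a (i + 2) < a (i + 1) ^ 2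

namespace StrictLogConcaveUpTo

variable {a : ℕ → ℝ} {n : ℕ}

lemma nonneg (ha : StrictLogConcaveUpTo a n) (i : ℕ) : 0 ≤ a i := by
  rcases le_or_gt i n with h | h
  · exact (ha.pos i h).le
  · exact (ha.eq_zero i h).ge

lemma mul_le_sq (ha : StrictLogConcaveUpTo a n) (i : ℕ) : a i * a (i + 2) ≤ a (i + 1) ^ 2 := by
  rcases le_or_gt (i + 2) n with h | h
  · exact (ha.mul_lt_sq i h).le
  · rw [ha.eq_zero (i + 2) h, mul_zero]
    positivity

lemma mul_add_three_le (ha : StrictLogConcaveUpTo a n) {i : ℕ} (hi : i + 2 ≤ n) :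
    a i * a (i + 3) ≤ a (i + 1) * a (i + 2) := by
  have hpos : 0 < a (i + 1) * a (i + 2) := mul_pos (ha.pos _ (by omega)) (ha.pos _ hi)
  refine le_of_mul_le_mul_right ?_ hpos
  calc a i * a (i + 3) * (a (i + 1) * a (i + 2))
      = (a i * a (i + 2)) * (a (i + 1) * a (i + 3)) := by ring
    _ ≤ a (i + 1) ^ 2 * a (i + 2) ^ 2 :=
        mul_le_mul (ha.mul_le_sq i) (ha.mul_le_sq (i + 1)) (mul_nonneg (ha.nonneg _) (ha.nonneg _))
          (sq_nonneg _)
    _ = a (i + 1) * a (i + 2) * (a (i + 1) * a (i + 2)) := by ring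

lemma add_mul_shift (ha : StrictLogConcaveUpTo a n) {r : ℝ} (hr : 0 ≤ r) :
    StrictLogConcaveUpTo (fun i ↦ a i + r * a (i + 1)) n where
  pos i hi := add_pos_of_pos_of_nonneg (ha.pos i hi) (mul_nonneg hr (ha.nonneg _))
  eq_zero i hi := by simp [ha.eq_zero i hi, ha.eq_zero (i + 1) (by omega)]
  mul_lt_sq i hi := by
    have h₀ := ha.mul_lt_sq i hi
    have h₁ := ha.mul_add_three_le hi
    have h₂ := ha.mul_le_sq (i + 1)
    have key : (a (i + 1) + r * a (i + 2)) ^ 2 - (a i + r * a (i + 1)) * (a (i + 2) + r * a (i + 3))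
        = (a (i + 1) ^ 2 - a i * a (i + 2)) + r * (a (i + 1) * a (i + 2) - a i * a (i + 3))
          + r ^ 2 * (a (i + 2) ^ 2 - a (i + 1) * a (i + 3)) := by ring
    have : 0 ≤ r * (a (i + 1) * a (i + 2) - a i * a (i + 3)) := mul_nonneg hr (by linarith)
    have : 0 ≤ r ^ 2 * (a (i + 2) ^ 2 - a (i + 1) * a (i + 3)) := mul_nonneg (sq_nonneg r) (by linarith)
    linarith

lemma mul_lt_of_eq_mul (ha : StrictLogConcaveUpTo a n) {i : ℕ} (hi : i + 3 ≤ n) {r : ℝ} (hr : 0 < r)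
    (h : a i = r * a (i + 2)) : r * a (i + 3) < a (i + 1) := by
  refine lt_of_mul_lt_mul_left ?_ (ha.nonneg (i + 1))
  calc a (i + 1) * (r * a (i + 3)) = r * (a (i + 1) * a (i + 3)) := by ring
    _ < r * a (i + 2) ^ 2 := mul_lt_mul_of_pos_left (ha.mul_lt_sq (i + 1) hi) hr
    _ = a i * a (i + 2) := by rw [h]; ring
    _ < a (i + 1) * a (i + 1) := by rw [← sq]; exact ha.mul_lt_sq i (by omega)

end StrictLogConcaveUpTo

theorem Nat.choose_mul_choose_add_two_lt_sq {n i : ℕ} (h : i + 2 ≤ n) :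
    n.choose i * n.choose (i + 2) < n.choose (i + 1) ^ 2 := by
  obtain ⟨u, rfl⟩ : ∃ u, n = i + 2 + u := ⟨n - (i + 2), by omega⟩
  have e₁ := Nat.choose_succ_right_eq (i + 2 + u) i
  have e₂ := Nat.choose_succ_right_eq (i + 2 + u) (i + 1)
  rw [show i + 2 + u - i = u + 2 by omega] at e₁
  rw [show i + 2 + u - (i + 1) = u + 1 by omega] at e₂
  have hpos : 0 < (i + 2 + u).choose (i + 1) := Nat.choose_pos (by omega)
  refine Nat.lt_of_mul_lt_mul_right (a := (i + 2) * (u + 2)) ?_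
  calc (i + 2 + u).choose i * (i + 2 + u).choose (i + 2) * ((i + 2) * (u + 2))
      = ((i + 2 + u).choose i * (u + 2)) * ((i + 2 + u).choose (i + 1 + 1) * (i + 1 + 1)) := by ring
    _ = (i + 2 + u).choose (i + 1) ^ 2 * ((i + 1) * (u + 1)) := by rw [← e₁, e₂]; ring
    _ < (i + 2 + u).choose (i + 1) ^ 2 * ((i + 2) * (u + 2)) := by gcongr <;> omega

lemma strictLogConcaveUpTo_choose (n : ℕ) : StrictLogConcaveUpTo (fun i ↦ (n.choose i : ℝ)) n where
  pos i hi := by exact_mod_cast Nat.choose_pos hi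
  eq_zero i hi := by simp [Nat.choose_eq_zero_of_lt hi]
  mul_lt_sq i hi := by exact_mod_cast Nat.choose_mul_choose_add_two_lt_sq hi
noncomputable def shiftedChooseSum (n m i : ℕ) (r : ℝ) : ℝ :=
  ∑ j ∈ range (n + 1), (n.choose (j + i) : ℝ) * m.choose j * r ^ j

lemma shiftedChooseSum_zero (n i : ℕ) (r : ℝ) : shiftedChooseSum n 0 i r = n.choose i := by
  simp [shiftedChooseSum, sum_range_succ']

lemma shiftedChooseSum_succ (n m i : ℕ) (r : ℝ) :
    shiftedChooseSum n (m + 1) i r = shiftedChooseSum n m i r + r * shiftedChooseSum n m (i + 1) r := by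
  have hshift : ∑ j ∈ range n, (n.choose (j + 1 + i) : ℝ) * m.choose j * r ^ (j + 1)
      = r * ∑ j ∈ range n, (n.choose (j + (i + 1)) : ℝ) * m.choose j * r ^ j := by
    rw [mul_sum]
    exact sum_congr rfl fun j _ ↦ by rw [Nat.add_right_comm, ← add_assoc]; ring
  rw [shiftedChooseSum, sum_range_succ', shiftedChooseSum, sum_range_succ', shiftedChooseSum,
    sum_range_succ, Nat.choose_eq_zero_of_lt (show n < n + (i + 1) by omega)]
  simp only [Nat.choose_succ_succ', Nat.cast_add, mul_add, add_mul, sum_add_distrib, hshift, zero_add,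
    Nat.choose_zero_right, Nat.cast_zero, Nat.cast_one, zero_mul, add_zero]
  ring

lemma strictLogConcaveUpTo_shiftedChooseSum (n m : ℕ) {r : ℝ} (hr : 0 ≤ r) :
    StrictLogConcaveUpTo (fun i ↦ shiftedChooseSum n m i r) n := by
  induction m with
  | zero => simpa only [shiftedChooseSum_zero] using strictLogConcaveUpTo_choose n
  | succ m ih => simpa only [shiftedChooseSum_succ] using ih.add_mul_shift hr

lemma genNarayana_eq_shiftedChooseSum (n m : ℕ) (r : ℝ) :
    genNarayana n m r = shiftedChooseSum n m 0 r - r * shiftedChooseSum n m 2 r := by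
  simp only [genNarayana, shiftedChooseSum, sub_mul, sum_sub_distrib, add_zero]
  congr 1
  rw [sum_range_succ', sum_range_succ _ n, Nat.choose_eq_zero_of_lt (show n < n + 2 by omega)]
  simp only [Nat.add_one_ne_zero, if_false, if_true, Nat.add_sub_cancel, Nat.cast_zero, zero_mul,
    add_zero, mul_sum]
  exact sum_congr rfl fun k _ ↦ by ring

lemma genNarayana_succ_right (n m : ℕ) (r : ℝ) :
    genNarayana n (m + 1) r = genNarayana n m r
      + r * (shiftedChooseSum n m 1 r - r * shiftedChooseSum n m 3 r) := by
  simp only [genNarayana_eq_shiftedChooseSum, shiftedChooseSum_succ]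
  ring

theorem genNarayana_next_m_pos_at_zero (m n : ℕ) (h : m + 4 ≤ n) (r : ℝ)
    (hr : 0 < r) (hroot : genNarayana n m r = 0) :
    0 < genNarayana n (m + 1) r := by
  have hroot' : shiftedChooseSum n m 0 r = r * shiftedChooseSum n m 2 r := by
    rw [genNarayana_eq_shiftedChooseSum] at hroot
    linarith
  have key := (strictLogConcaveUpTo_shiftedChooseSum n m hr.le).mul_lt_of_eq_mul
    (i := 0) (by omega) hr hroot'
  rw [genNarayana_succ_right, hroot, zero_add]
  exact mul_pos hr (sub_pos.2 key)
end
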